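/- Let G, G', and G'' be finite groups of equal order. If π ∈ bij(G,G') and π' ∈ bij(G',G''), and at least one of π and π' is a group isomorphism, then D^{π ∘ π'} = D^π · D^{π'}. -/
import Mathlib


open scoped BigOperators Classical

/-- A winning correlation for the `(G,G')`-bijection game: nonnegative values,
the outputs sum to one for each pair of inputs, and the value is zero whenever
exactly one of `b = d` and `a = c` holds. -/
def IsWinningCorrelation {G G' : Type*} [Group G] [Group G'] [Fintype G] [Fintype G']
    (p : G → G → G' → G' → ℝ) : Prop :=
  (∀ (b d : G) (a c : G'), 0 ≤ p b d a c) ∧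
  (∀ a c : G', (∑ b : G, ∑ d : G, p b d a c) = 1) ∧
  (∀ (b d : G) (a c : G'), ¬(b = d ↔ a = c) → p b d a c = 0)

/-- Membership in `B̂(G,G')`: a winning correlation whose sum over all pairs of
inputs is `1` for every pair of outputs. -/
def MemBhat {G G' : Type*} [Group G] [Group G'] [Fintype G] [Fintype G']
    (p : G → G → G' → G' → ℝ) : Prop :=
  IsWinningCorrelation p ∧ ∀ b d : G, (∑ a : G', ∑ c : G', p b d a c) = 1

/-- A `(G,G')`-invariant correlation: an element of `B̂(G,G')` whose values depend only
on the quotients `b⁻¹ * d ∈ G` and `a⁻¹ * c ∈ G'`. -/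
def IsInvariantCorrelation {G G' : Type*} [Group G] [Group G'] [Fintype G] [Fintype G']
    (p : G → G → G' → G' → ℝ) : Prop :=
  MemBhat p ∧
  ∀ (b d b' d' : G) (a c a' c' : G'),
    b⁻¹ * d = b'⁻¹ * d' → a⁻¹ * c = a'⁻¹ * c' → p b d a c = p b' d' a' c'

/-- The correlation `p_G`. -/
noncomputable def pUnif (G : Type*) [Group G] [Fintype G] : G → G → G → G → ℝ :=
  fun b d a c => if b⁻¹ * d = a⁻¹ * c then ((Fintype.card G : ℝ))⁻¹ else 0

/-- Composition of correlations. -/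
def corComp {G G' G'' : Type*} [Fintype G']
    (p₁ : G → G → G' → G' → ℝ) (p₂ : G' → G' → G'' → G'' → ℝ) :
    G → G → G'' → G'' → ℝ :=
  fun b d a c => ∑ x : G', ∑ y : G', p₁ b d x y * p₂ x y a c

/-- The correlation matrix `D^p` of a `(G,G')`-invariant correlation `p`:
`D^p_{x,y} = |G| ⬝ p(b,d|a,c)` for any `b,d,a,c` with `b⁻¹d = x`, `a⁻¹c = y`
(here realized with `b = a = e`). -/
noncomputable def corrMatrix {G G' : Type*} [Group G] [Group G'] [Fintype G]
    (p : G → G → G' → G' → ℝ) : Matrix G G' ℝ :=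
  Matrix.of fun x y => (Fintype.card G : ℝ) * p 1 x 1 y

/-- The deterministic correlation `p_π` associated with a bijection `π` from `G'` to `G`. -/
noncomputable def detCor {G G' : Type*} (π : G' ≃ G) : G → G → G' → G' → ℝ :=
  fun b d a c => if b = π a ∧ d = π c then 1 else 0

/-- The permutation matrix `P^π` of a bijection `π` from `G'` to `G`. -/
noncomputable def permMatrix {G G' : Type*} (π : G' ≃ G) : Matrix G G' ℝ :=
  Matrix.of fun x y => if x = π y then 1 else 0

/-- The matrix `D^π`: the correlation matrix of the `(G,G')`-invariant correlation
`p_G ∘ p_π ∘ p_{G'}`. -/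
noncomputable def Dpi {G G' : Type*} [Group G] [Group G'] [Fintype G] [Fintype G']
    (π : G' ≃ G) : Matrix G G' ℝ :=
  corrMatrix (corComp (pUnif G) (corComp (detCor π) (pUnif G')))

lemma Dpi_apply {G G' : Type*} [Group G] [Group G'] [Fintype G] [Fintype G']
    (π : G' ≃ G) (x : G) (y : G') :
    Dpi π x y = (Fintype.card G' : ℝ)⁻¹ *
      ∑ u : G, (if (π.symm u)⁻¹ * π.symm (u * x) = y then (1:ℝ) else 0) := by
  have key : ∀ (u v : G),
      (∑ s : G', ∑ t : G', detCor π u v s t * pUnif G' s t 1 y)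
        = pUnif G' (π.symm u) (π.symm v) 1 y := by
    intro u v
    rw [← Equiv.sum_comp π.symm (fun s => ∑ t : G', detCor π u v s t * pUnif G' s t 1 y)]
    simp only [detCor]
    have : ∀ w : G, (∑ t : G', (if u = π (π.symm w) ∧ v = π t then (1:ℝ) else 0) * pUnif G' (π.symm w) t 1 y)
        = ∑ t : G', (if w = u then (if t = π.symm v then pUnif G' (π.symm w) t 1 y else 0) else 0) := by
      intro w
      refine Finset.sum_congr rfl fun t _ => ?_
      simp only [Equiv.apply_symm_apply]
      by_cases h1 : w = u <;> by_cases h2 : t = π.symm v <;>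
        simp [h1, h2, eq_comm, Equiv.eq_symm_apply] <;> aesop
    simp only [this]
    simp [Finset.sum_ite_eq]
  unfold Dpi corrMatrix
  simp only [Matrix.of_apply]
  unfold corComp
  simp only [key]
  have h2 : ∀ u : G, (∑ v : G, pUnif G 1 x u v * pUnif G' (π.symm u) (π.symm v) 1 y)
      = (Fintype.card G : ℝ)⁻¹ * pUnif G' (π.symm u) (π.symm (u * x)) 1 y := by
    intro u
    have : ∀ v : G, pUnif G 1 x u v * pUnif G' (π.symm u) (π.symm v) 1 y
        = (if u * x = v then (Fintype.card G : ℝ)⁻¹ * pUnif G' (π.symm u) (π.symm v) 1 y else 0) := by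
      intro v
      simp only [pUnif, inv_one, one_mul, eq_inv_mul_iff_mul_eq]
      by_cases h : u * x = v <;> simp [h]
    simp only [this, Finset.sum_ite_eq Finset.univ (u * x)]
    simp
  simp only [h2]
  rw [← Finset.mul_sum, ← mul_assoc,
    mul_inv_cancel₀ (Nat.cast_ne_zero.mpr Fintype.card_ne_zero : (Fintype.card G : ℝ) ≠ 0),
    one_mul, Finset.mul_sum]
  refine Finset.sum_congr rfl fun u _ => ?_
  simp only [pUnif, inv_one, one_mul, mul_ite, mul_one, mul_zero]

lemma symm_map_mul {G G' : Type*} [Group G] [Group G'] (π : G' ≃ G)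
    (hπ : ∀ x y : G', π (x * y) = π x * π y) :
    ∀ a b : G, π.symm (a * b) = π.symm a * π.symm b := by
  intro a b
  apply π.injective
  rw [hπ, Equiv.apply_symm_apply, Equiv.apply_symm_apply, Equiv.apply_symm_apply]

lemma Dpi_iso {G G' : Type*} [Group G] [Group G'] [Fintype G] [Fintype G']
    (π : G' ≃ G) (hπ : ∀ x y : G', π (x * y) = π x * π y)
    (hcard : Fintype.card G = Fintype.card G') (x : G) (y : G') :
    Dpi π x y = if π.symm x = y then 1 else 0 := by
  rw [Dpi_apply]
  have h1 : ∀ u : G, (π.symm u)⁻¹ * π.symm (u * x) = π.symm x := by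
    intro u; rw [symm_map_mul π hπ]; group
  simp only [h1]
  by_cases h : π.symm x = y
  · simp only [h, if_true, Finset.sum_const, Finset.card_univ, nsmul_eq_mul, mul_one, hcard]
    exact inv_mul_cancel₀ (Nat.cast_ne_zero.mpr Fintype.card_ne_zero)
  · simp [h]

/-- If `π ∈ bij(G,G')` and `π' ∈ bij(G',G'')` and at least one of them is a
group isomorphism, then `D^{π ∘ π'} = D^π ⬝ D^{π'}`. -/
theorem stmt5 {G G' G'' : Type*} [Group G] [Group G'] [Group G'']
    [Fintype G] [Fintype G'] [Fintype G'']
    (hcard : Fintype.card G = Fintype.card G')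
    (hcard' : Fintype.card G' = Fintype.card G'')
    (π : G' ≃ G) (π' : G'' ≃ G')
    (hiso : (∀ x y : G', π (x * y) = π x * π y) ∨
      (∀ x y : G'', π' (x * y) = π' x * π' y)) :
    Dpi (π'.trans π) = Dpi π * Dpi π' := by
  ext x z
  rw [Matrix.mul_apply]
  rcases hiso with hπ | hπ'
  · have hs := symm_map_mul π hπ
    have hrhs : (∑ y : G', Dpi π x y * Dpi π' y z) = Dpi π' (π.symm x) z := by
      simp only [Dpi_iso π hπ hcard, ite_mul, one_mul, zero_mul]
      simp [Finset.sum_ite_eq]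
    rw [hrhs, Dpi_apply, Dpi_apply]
    congr 1
    rw [← Equiv.sum_comp π.symm
      (fun w => if (π'.symm w)⁻¹ * π'.symm (w * π.symm x) = z then (1:ℝ) else 0)]
    refine Finset.sum_congr rfl fun u _ => ?_
    simp only [Equiv.symm_trans_apply, hs]
  · have hs := symm_map_mul π' hπ'
    have hsi : ∀ a : G', π'.symm a⁻¹ = (π'.symm a)⁻¹ := by
      intro a
      apply π'.injective
      rw [Equiv.apply_symm_apply]
      have := hπ' (π'.symm a)⁻¹ (π'.symm a)
      simp only [inv_mul_cancel, Equiv.apply_symm_apply] at this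
      have h1 : π' 1 = 1 := by
        have := hπ' 1 1; simpa using this.symm
      rw [h1] at this
      exact (eq_inv_of_mul_eq_one_left this.symm).symm
    have hrhs : (∑ y : G', Dpi π x y * Dpi π' y z) = Dpi π x (π' z) := by
      simp only [Dpi_iso π' hπ' hcard', mul_ite, mul_one, mul_zero]
      have : ∀ y : G', (π'.symm y = z) = (y = π' z) := by
        intro y; rw [Equiv.symm_apply_eq]
      simp only [this]
      simp [Finset.sum_ite_eq']
    rw [hrhs, Dpi_apply, Dpi_apply, hcard']
    congr 1
    refine Finset.sum_congr rfl fun u _ => ?_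
    simp only [Equiv.symm_trans_apply, ← hs, ← hsi, ← Equiv.symm_apply_eq]
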